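/- Let α ∈ (1/2, 1), u ∈ C²([0,1]) with u(0) = u'(0) = 0, and v ∈ C¹([0,1]). Define E = ½∫₀¹ v(x)² dx + ½∫₀¹ u''(x)² dx + ½∫₀¹ v'(x)² dx and ϱ = ∫₀¹ ( v(x)(x u'(x) − α u(x)) + v'(x)((1−α)u'(x) + x u''(x)) ) dx. Then |ϱ| ≤ ((1+α)/2)∫₀¹ v² dx + (3/2)∫₀¹ u''² dx + ((2−α)/2)∫₀¹ v'² dx, and consequently |ϱ| ≤ 3E. -/

import Mathlib

/-!
Weighted AM–GM on each of the four products in the integrand of `ϱ` bounds `|ϱ|` by a combination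
of `∫ v²`, `∫ v'²`, `∫ u''²` and the lower-order terms `∫ u²`, `∫ u'²`. Since `u(0) = u'(0) = 0`,
the Poincaré inequality (from `h(x) = ∫₀ˣ h'` and Cauchy–Schwarz) gives `∫ u² ≤ ∫ u'² ≤ ∫ u''²`,
which absorbs the lower-order terms into `∫ u''²`.
-/

open Set intervalIntegral
open MeasureTheory (volume)

theorem sq_intervalIntegral_le {a b : ℝ} (hab : a ≤ b) {g : ℝ → ℝ}
    (hg : IntervalIntegrable g volume a b)
    (hg2 : IntervalIntegrable (fun x => g x ^ 2) volume a b) :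
    (∫ x in a..b, g x) ^ 2 ≤ (b - a) * ∫ x in a..b, g x ^ 2 := by
  -- `t ↦ ∫ (g - t) ^ 2` is a nonnegative quadratic, so its discriminant is nonpositive.
  have hquad : ∀ t : ℝ, 0 ≤ (b - a) * (t * t) + (-2 * ∫ x in a..b, g x) * t
      + ∫ x in a..b, g x ^ 2 := by
    intro t
    have hexpand : ∫ x in a..b, (g x - t) ^ 2
        = (b - a) * (t * t) + (-2 * ∫ x in a..b, g x) * t + ∫ x in a..b, g x ^ 2 := by
      simp_rw [sub_sq]
      rw [integral_add (hg2.sub ((hg.const_mul _).mul_const _)) intervalIntegrable_const,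
        integral_sub hg2 ((hg.const_mul _).mul_const _), integral_mul_const,
        integral_const_mul, integral_const, smul_eq_mul]
      ring
    rw [← hexpand]
    exact integral_nonneg hab fun x _ => sq_nonneg _
  have := discrim_le_zero hquad
  rw [discrim] at this
  linarith

theorem integral_sq_le_of_eq_zero {a b : ℝ} (hab : a ≤ b) {h : ℝ → ℝ} (hh : ContDiff ℝ 1 h)
    (ha : h a = 0) :
    ∫ x in a..b, h x ^ 2 ≤ (b - a) ^ 2 * ∫ x in a..b, deriv h x ^ 2 := by
  have hd : Differentiable ℝ h := hh.differentiable one_ne_zero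
  have hc : Continuous (deriv h) := hh.continuous_deriv le_rfl
  set K := ∫ x in a..b, deriv h x ^ 2
  have hpoint : ∀ x ∈ Icc a b, h x ^ 2 ≤ (b - a) * K := by
    rintro x ⟨hax, hxb⟩
    have hftc : h x = ∫ t in a..x, deriv h t := by
      rw [integral_deriv_eq_sub (fun t _ => hd t) (hc.intervalIntegrable _ _), ha, sub_zero]
    calc h x ^ 2 ≤ (x - a) * ∫ t in a..x, deriv h t ^ 2 := by
          rw [hftc]
          exact sq_intervalIntegral_le hax (hc.intervalIntegrable _ _)
            ((hc.pow 2).intervalIntegrable _ _)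
      _ ≤ (b - a) * K := by
          gcongr
          · exact integral_nonneg hax fun t _ => sq_nonneg _
          · exact integral_mono_interval le_rfl hax hxb
              (Filter.Eventually.of_forall fun t => sq_nonneg _)
              ((hc.pow 2).intervalIntegrable _ _)
  calc ∫ x in a..b, h x ^ 2 ≤ ∫ _ in a..b, (b - a) * K :=
        integral_mono_on hab ((hd.continuous.pow 2).intervalIntegrable _ _)
          intervalIntegrable_const hpoint
    _ = (b - a) ^ 2 * K := by
        rw [integral_const, smul_eq_mul]
        ring

/-- Weighted AM–GM `|p q| ≤ (p ^ 2 + q ^ 2) / 2` on the four products, with weights `x ≤ 1`, `α`,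
`1 - α` and `x ≤ 1`. -/
theorem abs_rho_integrand_le {x α : ℝ} (hx : x ∈ Icc 0 1) (hα : α ∈ Icc 0 1) (u f g v w : ℝ) :
    |v * (x * f - α * u) + w * ((1 - α) * f + x * g)|
      ≤ (1 + α) / 2 * v ^ 2 + (2 - α) / 2 * w ^ 2 + (2 - α) / 2 * f ^ 2
        + α / 2 * u ^ 2 + 1 / 2 * g ^ 2 := by
  obtain ⟨hx0, hx1⟩ := hx
  obtain ⟨hα0, hα1⟩ := hα
  have h1x : 0 ≤ 1 - x := by linarith
  have h1α : 0 ≤ 1 - α := by linarith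
  rw [abs_le]
  constructor
  · linarith [mul_nonneg hx0 (sq_nonneg (v + f)), mul_nonneg hx0 (sq_nonneg (w + g)),
      mul_nonneg h1x (sq_nonneg v), mul_nonneg h1x (sq_nonneg f),
      mul_nonneg h1x (sq_nonneg w), mul_nonneg h1x (sq_nonneg g),
      mul_nonneg hα0 (sq_nonneg (v - u)), mul_nonneg h1α (sq_nonneg (w + f))]
  · linarith [mul_nonneg hx0 (sq_nonneg (v - f)), mul_nonneg hx0 (sq_nonneg (w - g)),
      mul_nonneg h1x (sq_nonneg v), mul_nonneg h1x (sq_nonneg f),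
      mul_nonneg h1x (sq_nonneg w), mul_nonneg h1x (sq_nonneg g),
      mul_nonneg hα0 (sq_nonneg (v + u)), mul_nonneg h1α (sq_nonneg (w - f))]

theorem abs_integral_rho_integrand_le {α : ℝ} (hα : α ∈ Icc 0 1) {u f g v w : ℝ → ℝ}
    (hu : Continuous u) (hf : Continuous f) (hg : Continuous g) (hv : Continuous v)
    (hw : Continuous w) :
    |∫ x in (0:ℝ)..1, (v x * (x * f x - α * u x) + w x * ((1 - α) * f x + x * g x))|
      ≤ (1 + α) / 2 * (∫ x in (0:ℝ)..1, v x ^ 2) + (2 - α) / 2 * (∫ x in (0:ℝ)..1, w x ^ 2)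
        + (2 - α) / 2 * (∫ x in (0:ℝ)..1, f x ^ 2) + α / 2 * (∫ x in (0:ℝ)..1, u x ^ 2)
        + 1 / 2 * (∫ x in (0:ℝ)..1, g x ^ 2) := by
  have hint : ∀ φ : ℝ → ℝ, Continuous φ → IntervalIntegrable φ volume 0 1 :=
    fun φ hφ => hφ.intervalIntegrable 0 1
  calc _ ≤ ∫ x in (0:ℝ)..1, |v x * (x * f x - α * u x) + w x * ((1 - α) * f x + x * g x)| :=
        abs_integral_le_integral_abs zero_le_one
    _ ≤ ∫ x in (0:ℝ)..1, ((1 + α) / 2 * v x ^ 2 + (2 - α) / 2 * w x ^ 2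
          + (2 - α) / 2 * f x ^ 2 + α / 2 * u x ^ 2 + 1 / 2 * g x ^ 2) :=
        integral_mono_on zero_le_one (hint _ (by fun_prop)) (hint _ (by fun_prop))
          fun x hx => abs_rho_integrand_le hx hα _ _ _ _ _
    _ = _ := by
        rw [integral_add, integral_add, integral_add, integral_add]
        · simp only [integral_const_mul]
        all_goals exact hint _ (by fun_prop)

theorem stmt_2 (α : ℝ) (hα : 1/2 < α ∧ α < 1)
    (u v : ℝ → ℝ) (hu : ContDiff ℝ 2 u) (hv : ContDiff ℝ 1 v)
    (hu0 : u 0 = 0) (hu0' : deriv u 0 = 0)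
    (E ρ : ℝ)
    (hE : E = (1/2) * (∫ x in (0:ℝ)..1, (v x) ^ 2)
        + (1/2) * (∫ x in (0:ℝ)..1, (deriv (deriv u) x) ^ 2)
        + (1/2) * (∫ x in (0:ℝ)..1, (deriv v x) ^ 2))
    (hρ : ρ = ∫ x in (0:ℝ)..1,
        (v x * (x * deriv u x - α * u x)
          + deriv v x * ((1 - α) * deriv u x + x * deriv (deriv u) x))) :
    |ρ| ≤ ((1 + α)/2) * (∫ x in (0:ℝ)..1, (v x) ^ 2)
        + (3/2) * (∫ x in (0:ℝ)..1, (deriv (deriv u) x) ^ 2)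
        + ((2 - α)/2) * (∫ x in (0:ℝ)..1, (deriv v x) ^ 2) ∧
    |ρ| ≤ 3 * E := by
  obtain ⟨hα0, hα1⟩ : 0 ≤ α ∧ α ≤ 1 := ⟨by linarith, by linarith⟩
  have hu' : ContDiff ℝ 1 (deriv u) := hu.deriv'
  have hρ_amgm := abs_integral_rho_integrand_le ⟨hα0, hα1⟩ hu.continuous hu'.continuous
    (hu'.continuous_deriv le_rfl) hv.continuous (hv.continuous_deriv le_rfl)
  rw [← hρ] at hρ_amgm
  have hUF : ∫ x in (0:ℝ)..1, u x ^ 2 ≤ ∫ x in (0:ℝ)..1, deriv u x ^ 2 := by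
    simpa using integral_sq_le_of_eq_zero zero_le_one (hu.of_le one_le_two) hu0
  have hFG : ∫ x in (0:ℝ)..1, deriv u x ^ 2 ≤ ∫ x in (0:ℝ)..1, deriv (deriv u) x ^ 2 := by
    simpa using integral_sq_le_of_eq_zero zero_le_one hu' hu0'
  have hbound : |ρ| ≤ ((1 + α)/2) * (∫ x in (0:ℝ)..1, (v x) ^ 2)
      + (3/2) * (∫ x in (0:ℝ)..1, (deriv (deriv u) x) ^ 2)
      + ((2 - α)/2) * (∫ x in (0:ℝ)..1, (deriv v x) ^ 2) := by
    linarith [mul_le_mul_of_nonneg_left hFG (by linarith : 0 ≤ (2 - α) / 2),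
      mul_le_mul_of_nonneg_left (hUF.trans hFG) (by linarith : 0 ≤ α / 2)]
  refine ⟨hbound, ?_⟩
  have hv2 : 0 ≤ ∫ x in (0:ℝ)..1, v x ^ 2 := integral_nonneg zero_le_one fun x _ => sq_nonneg _
  have hv'2 : 0 ≤ ∫ x in (0:ℝ)..1, deriv v x ^ 2 :=
    integral_nonneg zero_le_one fun x _ => sq_nonneg _
  linarith [mul_le_mul_of_nonneg_right (by linarith : (1 + α) / 2 ≤ 3 / 2) hv2,
    mul_le_mul_of_nonneg_right (by linarith : (2 - α) / 2 ≤ 3 / 2) hv'2]
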